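/- arXiv:1501.03122 — 2 statements merged into one kernel-verified Lean document; each statement's English description precedes it below -/
import Mathlib

section
/- Let P = (f^{i,j}, g^j) and P̃ = (f̃^{i,j}, g̃^j) (1 ≤ i,j ≤ m) be two families of càdlàg functions, each satisfying hypotheses (H). Assume f^{i,j}(x) ≤ f̃^{i,j}(x) and g^j(t) ≤ g̃^j(t) for all i, j, x, t, and that for every j either f^{i,j}(x) < f̃^{i,j}(x) for all i and all x ≥ 0, or g^j(t) < g̃^j(t) for all t ≥ 0. If h and h̃ are non-negative solutions on [0,∞) of the time-change system driven by P and by P̃ respectively, with primitives c^j(t) = ∫_0^t h^j(s) ds and c̃^j(t) = ∫_0^t h̃^j(s) ds, then c^j(t) ≤ c̃^j(t) for all j and all t ≥ 0. -/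
open MeasureTheory Filter Function Set
open scoped ENNReal Topology

noncomputable section

/-- A function is càdlàg on `[0, τ)`: right-continuous at every `t ∈ [0, τ)` and with
left limits at every `t ∈ (0, τ)` (times are compared with `τ : ℝ≥0∞` via `ENNReal.ofReal`). -/
def CadlagOn (f : ℝ → ℝ) (τ : ℝ≥0∞) : Prop :=
  (∀ t : ℝ, 0 ≤ t → ENNReal.ofReal t < τ →
    Tendsto f (nhdsWithin t (Set.Ioi t)) (nhds (f t))) ∧
  (∀ t : ℝ, 0 < t → ENNReal.ofReal t < τ →
    ∃ l : ℝ, Tendsto f (nhdsWithin t (Set.Iio t)) (nhds l))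

/-- Càdlàg on all of `[0, ∞)`. -/
def Cadlag (f : ℝ → ℝ) : Prop := CadlagOn f ⊤

/-- Hypotheses (H) on the driving functions of the time-change system. -/
structure HypH (m : ℕ) (f : Fin m → Fin m → ℝ → ℝ) (g : Fin m → ℝ → ℝ) : Prop where
  cadlag_f : ∀ i j, Cadlag (f i j)
  cadlag_g : ∀ j, Cadlag (g j)
  /-- H1: the diagonal entries have no negative jumps -/
  no_neg_jumps : ∀ i, ∀ t : ℝ, 0 < t → Function.leftLim (f i i) t ≤ f i i t
  /-- H1: the off-diagonal entries are non-decreasing -/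
  mono_f : ∀ i j, i ≠ j → MonotoneOn (f i j) (Set.Ici 0)
  /-- H2 -/
  mono_g : ∀ j, MonotoneOn (g j) (Set.Ici 0)
  /-- H3 -/
  init_nonneg : ∀ j, 0 ≤ g j 0 + ∑ i, f i j 0

/-- The primitive `c(t) = ∫_0^t h(s) ds`. -/
def prim (h : ℝ → ℝ) (t : ℝ) : ℝ := ∫ s in (0:ℝ)..t, h s

/-- `h` solves the time-change system `h^j = Σ_i f^{i,j}∘c^i + g^j` on `[0, τ)`,
where `c^i` is the primitive of `h^i`. -/
def IsSolutionOn (m : ℕ) (f : Fin m → Fin m → ℝ → ℝ) (g : Fin m → ℝ → ℝ)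
    (τ : ℝ≥0∞) (h : Fin m → ℝ → ℝ) : Prop :=
  (∀ j, CadlagOn (h j) τ) ∧
  ∀ j, ∀ t : ℝ, 0 ≤ t → ENNReal.ofReal t < τ →
    h j t = (∑ i, f i j (prim (h i) t)) + g j t

/-- Non-negativity of a solution on `[0, τ)`. -/
def NonnegOn (m : ℕ) (τ : ℝ≥0∞) (h : Fin m → ℝ → ℝ) : Prop :=
  ∀ j, ∀ t : ℝ, 0 ≤ t → ENNReal.ofReal t < τ → 0 ≤ h j t

/-!
Continuous induction on the set of times at which `c ≤ c̃` holds componentwise: this set is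
closed and contains `0`. At such a time `x`, a component with `c^j(x) < c̃^j(x)` stays below
by continuity of the primitives. A component with `c^j(x) = c̃^j(x)` has `h^j(x) < h̃^j(x)`,
because `f̃^{i,j}` is non-decreasing for `i ≠ j`, the diagonal terms are evaluated at the same
point, and one of the comparisons is strict; by right-continuity `h^j < h̃^j` just after `x`,
so integrating keeps `c^j ≤ c̃^j` on a right neighbourhood of `x`.
-/

open intervalIntegral

section RightContinuous

variable {f : ℝ → ℝ}

theorem measurable_of_continuousWithinAt_Ici (hf : ∀ x, ContinuousWithinAt f (Ici x) x) :
    Measurable f := by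
  -- `f` is the pointwise limit of `f ∘ q n`, where `q n x` is the first point of the grid
  -- `ℤ / (n + 1)` strictly to the right of `x`.
  set q : ℕ → ℝ → ℝ := fun n x => (⌊x * (n + 1)⌋ + 1) / (n + 1)
  have hq_meas : ∀ n, Measurable fun x => f (q n x) := fun n =>
    (measurable_of_countable fun k : ℤ => f ((k + 1) / (n + 1))).comp
      (measurable_id.mul_const _).floor
  refine measurable_of_tendsto_metrizable hq_meas (tendsto_pi_nhds.2 fun x => ?_)
  have hlt : ∀ n : ℕ, x < q n x := fun n => by
    rw [lt_div_iff₀ (by positivity)]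
    exact Int.lt_floor_add_one _
  have hle : ∀ n : ℕ, q n x ≤ x + 1 / (n + 1) := fun n => by
    rw [div_le_iff₀ (by positivity), add_mul, one_div_mul_cancel (by positivity)]
    exact add_le_add_left (Int.floor_le _) 1
  have hq : Tendsto (q · x) atTop (𝓝[>] x) := by
    refine tendsto_nhdsWithin_iff.2 ⟨?_, Eventually.of_forall hlt⟩
    have hx := tendsto_one_div_add_atTop_nhds_zero_nat.const_add x
    rw [add_zero] at hx
    exact tendsto_of_tendsto_of_tendsto_of_le_of_le tendsto_const_nhds hx
      (fun n => (hlt n).le) hle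
  exact (continuousWithinAt_Ioi_iff_Ici.2 (hf x)).tendsto.comp hq

theorem locallyIntegrable_of_continuousWithinAt_Ici_of_tendsto_nhdsLT
    (hr : ∀ x, ContinuousWithinAt f (Ici x) x) (hl : ∀ x, ∃ l, Tendsto f (𝓝[<] x) (𝓝 l)) :
    LocallyIntegrable f := by
  have hfm := (measurable_of_continuousWithinAt_Ici hr).aestronglyMeasurable (μ := volume)
  intro x
  obtain ⟨l, hl⟩ := hl x
  rw [← nhdsLT_sup_nhdsGE, IntegrableAtFilter.sup_iff]
  exact ⟨hl.integrableAtFilter hfm.stronglyMeasurableAtFilter (volume.finiteAt_nhdsWithin _ _),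
    (hr x).tendsto.integrableAtFilter hfm.stronglyMeasurableAtFilter
      (volume.finiteAt_nhdsWithin _ _)⟩

end RightContinuous

theorem eqOn_comp_max_zero (f : ℝ → ℝ) : EqOn (fun t => f (max t 0)) f (Ici 0) :=
  fun _ ht => congrArg f (max_eq_left ht)

namespace Cadlag

variable {f : ℝ → ℝ}

theorem tendsto_nhdsGT (hf : Cadlag f) {x : ℝ} (hx : 0 ≤ x) :
    Tendsto f (𝓝[>] x) (𝓝 (f x)) :=
  hf.1 x hx ENNReal.ofReal_lt_top

theorem exists_tendsto_nhdsLT (hf : Cadlag f) {x : ℝ} (hx : 0 < x) :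
    ∃ l, Tendsto f (𝓝[<] x) (𝓝 l) :=
  hf.2 x hx ENNReal.ofReal_lt_top

theorem locallyIntegrable_comp_max_zero (hf : Cadlag f) :
    LocallyIntegrable fun t => f (max t 0) := by
  refine locallyIntegrable_of_continuousWithinAt_Ici_of_tendsto_nhdsLT (fun x => ?_) (fun x => ?_)
  · exact ContinuousWithinAt.comp (f := fun t : ℝ => max t 0)
      (continuousWithinAt_Ioi_iff_Ici.1 (hf.tendsto_nhdsGT (le_max_right x 0)))
      (continuous_id.max continuous_const).continuousWithinAt
      fun t (ht : x ≤ t) => (max_le_max_right 0 ht : max x 0 ≤ max t 0)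
  · rcases le_or_gt x 0 with hx | hx
    · refine ⟨f 0, tendsto_const_nhds.congr' ?_⟩
      filter_upwards [self_mem_nhdsWithin] with t (ht : t < x)
      rw [max_eq_right (ht.le.trans hx)]
    · obtain ⟨l, hl⟩ := hf.exists_tendsto_nhdsLT hx
      refine ⟨l, hl.congr' ?_⟩
      filter_upwards [Ioo_mem_nhdsLT hx] with t ht
      exact (eqOn_comp_max_zero f ht.1.le).symm

theorem intervalIntegrable_comp_max_zero (hf : Cadlag f) (a b : ℝ) :
    IntervalIntegrable (fun t => f (max t 0)) volume a b :=
  (hf.locallyIntegrable_comp_max_zero.integrableOn_isCompact isCompact_uIcc).intervalIntegrable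

theorem intervalIntegrable (hf : Cadlag f) {a b : ℝ} (ha : 0 ≤ a) (hb : 0 ≤ b) :
    IntervalIntegrable f volume a b := by
  refine (intervalIntegrable_congr fun t ht => eqOn_comp_max_zero f ?_).1
    (hf.intervalIntegrable_comp_max_zero a b)
  exact (le_min ha hb).trans ht.1.le

theorem continuousOn_prim (hf : Cadlag f) : ContinuousOn (prim f) (Ici 0) := by
  have hF := continuous_primitive hf.intervalIntegrable_comp_max_zero 0
  refine hF.continuousOn.congr fun t (ht : 0 ≤ t) => integral_congr fun s hs => ?_
  rw [uIcc_of_le ht] at hs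
  exact (eqOn_comp_max_zero f hs.1).symm

theorem prim_add_integral (hf : Cadlag f) {x t : ℝ} (hx : 0 ≤ x) (hxt : x ≤ t) :
    prim f x + ∫ s in x..t, f s = prim f t :=
  integral_add_adjacent_intervals (hf.intervalIntegrable le_rfl hx)
    (hf.intervalIntegrable hx (hx.trans hxt))

theorem eventually_prim_le_of_lt {g : ℝ → ℝ} (hf : Cadlag f) (hg : Cadlag g) {x : ℝ}
    (hx : 0 ≤ x) (hle : prim f x ≤ prim g x) (hlt : f x < g x) :
    ∀ᶠ t in 𝓝[>] x, prim f t ≤ prim g t := by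
  obtain ⟨r, hxr, hr⟩ := mem_nhdsGT_iff_exists_Ioo_subset.1
    ((hf.tendsto_nhdsGT hx).eventually_lt (hg.tendsto_nhdsGT hx) hlt)
  filter_upwards [Ioo_mem_nhdsGT hxr] with t ht
  have hint : ∫ s in x..t, f s ≤ ∫ s in x..t, g s :=
    integral_mono_on_of_le_Ioo ht.1.le (hf.intervalIntegrable hx (hx.trans ht.1.le))
      (hg.intervalIntegrable hx (hx.trans ht.1.le))
      fun s hs => (hr ⟨hs.1, hs.2.trans ht.2⟩).le
  rw [← hf.prim_add_integral hx ht.1.le, ← hg.prim_add_integral hx ht.1.le]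
  exact add_le_add hle hint

theorem eventually_prim_le {g : ℝ → ℝ} (hf : Cadlag f) (hg : Cadlag g) {x : ℝ} (hx : 0 ≤ x)
    (hle : prim f x ≤ prim g x) (hlt : prim f x = prim g x → f x < g x) :
    ∀ᶠ t in 𝓝[>] x, prim f t ≤ prim g t := by
  rcases hle.lt_or_eq with hstrict | heq
  · have hIoi : Ioi x ⊆ Ici 0 := Ioi_subset_Ici_self.trans (Ici_subset_Ici.2 hx)
    exact (((hf.continuousOn_prim x hx).mono hIoi).eventually_lt
      ((hg.continuousOn_prim x hx).mono hIoi) hstrict).mono fun _ => le_of_lt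
  · exact hf.eventually_prim_le_of_lt hg hx hle (hlt heq)

end Cadlag

theorem prim_nonneg {f : ℝ → ℝ} (hf : ∀ s, 0 ≤ s → 0 ≤ f s) {t : ℝ} (ht : 0 ≤ t) :
    0 ≤ prim f t :=
  integral_nonneg ht fun s hs => hf s hs.1

theorem forall_mem_Icc_le_of_eventually_le_nhdsGT {β : Type*} [TopologicalSpace β] [Preorder β]
    [OrderClosedTopology β] {u v : ℝ → β} {a b : ℝ} (hu : ContinuousOn u (Icc a b))
    (hv : ContinuousOn v (Icc a b)) (ha : u a ≤ v a)
    (hstep : ∀ x ∈ Ico a b, u x ≤ v x → ∀ᶠ t in 𝓝[>] x, u t ≤ v t) :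
    ∀ t ∈ Icc a b, u t ≤ v t := by
  have hclosed : IsClosed ({t | u t ≤ v t} ∩ Icc a b) := by
    rw [inter_comm]
    exact (hu.prodMk hv).preimage_isClosed_of_isClosed isClosed_Icc isClosed_le_prod
  exact fun t ht => hclosed.Icc_subset_of_forall_mem_nhdsWithin ha
    (fun x hx => hstep x hx.2 hx.1) ht

theorem sum_apply_add_lt_sum_apply_add {ι : Type*} [Fintype ι] {F F' : ι → ℝ → ℝ}
    {G G' : ℝ → ℝ} (j : ι) (hmono : ∀ i, i ≠ j → MonotoneOn (F' i) (Ici 0))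
    (hF : ∀ i, ∀ x : ℝ, 0 ≤ x → F i x ≤ F' i x) (hG : ∀ t : ℝ, 0 ≤ t → G t ≤ G' t)
    (hstrict : (∀ i, ∀ x : ℝ, 0 ≤ x → F i x < F' i x) ∨ (∀ t : ℝ, 0 ≤ t → G t < G' t))
    {a b : ι → ℝ} (ha : 0 ≤ a) (hab : a ≤ b) (hj : a j = b j) {t : ℝ} (ht : 0 ≤ t) :
    ∑ i, F i (a i) + G t < ∑ i, F' i (b i) + G' t := by
  have hterm : ∀ i, F i (a i) ≤ F' i (b i) := by
    intro i
    rcases eq_or_ne i j with rfl | hij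
    · exact hj ▸ hF i _ (ha i)
    · exact (hF i _ (ha i)).trans (hmono i hij (ha i) ((ha i).trans (hab i)) (hab i))
  rcases hstrict with hF' | hG'
  · have hsum : ∑ i, F i (a i) < ∑ i, F' i (b i) :=
      Finset.sum_lt_sum (fun i _ => hterm i) ⟨j, Finset.mem_univ j, hj ▸ hF' j _ (ha j)⟩
    linarith [hG t ht]
  · linarith [Finset.sum_le_sum fun i (_ : i ∈ Finset.univ) => hterm i, hG' t ht]

theorem stmt0_general (m : ℕ)
    (f ftil : Fin m → Fin m → ℝ → ℝ) (g gtil : Fin m → ℝ → ℝ)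
    (hHtil : HypH m ftil gtil)
    (hle_f : ∀ i j, ∀ x : ℝ, 0 ≤ x → f i j x ≤ ftil i j x)
    (hle_g : ∀ j, ∀ t : ℝ, 0 ≤ t → g j t ≤ gtil j t)
    (hstrict : ∀ j, (∀ i, ∀ x : ℝ, 0 ≤ x → f i j x < ftil i j x) ∨
      (∀ t : ℝ, 0 ≤ t → g j t < gtil j t))
    (h htil : Fin m → ℝ → ℝ)
    (hsol : IsSolutionOn m f g ⊤ h) (hsoltil : IsSolutionOn m ftil gtil ⊤ htil)
    (hnn : NonnegOn m ⊤ h) :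
    ∀ j, ∀ t : ℝ, 0 ≤ t → prim (h j) t ≤ prim (htil j) t := by
  intro j t ht
  have hcad : ∀ i, Cadlag (h i) := hsol.1
  have hcadtil : ∀ i, Cadlag (htil i) := hsoltil.1
  refine forall_mem_Icc_le_of_eventually_le_nhdsGT (u := fun s i => prim (h i) s)
    (v := fun s i => prim (htil i) s)
    (continuousOn_pi.2 fun i => (hcad i).continuousOn_prim.mono Icc_subset_Ici_self)
    (continuousOn_pi.2 fun i => (hcadtil i).continuousOn_prim.mono Icc_subset_Ici_self)
    (fun i => by simp [prim]) ?_ t ⟨ht, le_rfl⟩ j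
  rintro x ⟨hx, -⟩ hle
  refine eventually_all.2 fun i => (hcad i).eventually_prim_le (hcadtil i) hx (hle i) fun heq => ?_
  rw [hsol.2 i x hx ENNReal.ofReal_lt_top, hsoltil.2 i x hx ENNReal.ofReal_lt_top]
  exact sum_apply_add_lt_sum_apply_add i (fun k hk => hHtil.mono_f k i hk) (fun k => hle_f k i)
    (hle_g i) (hstrict i) (fun k => prim_nonneg (fun s hs => hnn k s hs ENNReal.ofReal_lt_top) hx)
    hle heq hx

/-- basic monotonicity lemma. -/
theorem stmt0 (m : ℕ) (hm : 1 ≤ m)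
    (f ftil : Fin m → Fin m → ℝ → ℝ) (g gtil : Fin m → ℝ → ℝ)
    (hH : HypH m f g) (hHtil : HypH m ftil gtil)
    (hle_f : ∀ i j, ∀ x : ℝ, 0 ≤ x → f i j x ≤ ftil i j x)
    (hle_g : ∀ j, ∀ t : ℝ, 0 ≤ t → g j t ≤ gtil j t)
    (hstrict : ∀ j, (∀ i, ∀ x : ℝ, 0 ≤ x → f i j x < ftil i j x) ∨
      (∀ t : ℝ, 0 ≤ t → g j t < gtil j t))
    (h htil : Fin m → ℝ → ℝ)
    (hsol : IsSolutionOn m f g ⊤ h) (hsoltil : IsSolutionOn m ftil gtil ⊤ htil)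
    (hnn : NonnegOn m ⊤ h) (hnntil : NonnegOn m ⊤ htil) :
    ∀ j, ∀ t : ℝ, 0 ≤ t → prim (h j) t ≤ prim (htil j) t :=
  stmt0_general m f ftil g gtil hHtil hle_f hle_g hstrict h htil hsol hsoltil hnn
end
end

section
/- Let f : [0,∞) → ℝ be càdlàg with no negative jumps (f(t) ≥ f(t−) for all t > 0), let x ≥ 0 with f(x) > 0, and set T = inf{t ≥ x : f(t) = 0} (with inf ∅ = ∞). Define f̃(t) = f(t) for t < T and f̃(t) = 0 for t ≥ T, and define i : [x,∞) → [0,∞] by i(y) = ∫_x^y (1/f̃(t)) dt. Let c : [0,∞) → [x,∞] be the right-continuous inverse of i, i.e. c(t) = inf{y ≥ x : i(y) > t}. Then c(0) = x, c is non-decreasing and continuous, c is strictly increasing on [0, i(T−)) and constant equal to T on [i(T−), ∞), and on [0, i(T−)) the function c admits a càdlàg right-hand derivative h which satisfies h(t) = f(c(t)) for all t ∈ [0, i(T−)). In particular, c solves the one-dimensional initial value problem: its right-hand derivative equals f ∘ c, with c(0) = x. -/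
open MeasureTheory Filter Function Set
open scoped ENNReal Topology

noncomputable section

/-!
The clock `i` integrates `1 / f̃`. While `f̃ = f > 0` the integrand is right-continuous, so there
`i` is continuous with right derivative `1 / f`; and `i` increases strictly wherever it is finite,
because `1 / f̃` is locally bounded below. Hence the right-continuous inverse `c` is continuous,
satisfies `i (c t) = t` for `t < L = i(T−)`, and the inverse function theorem turns `i' = 1 / f`
into `c' = f ∘ c`. Before `T` the function `f` stays positive: at the first point where it is
not, right-continuity gives `f ≤ 0`, the left limit is `≥ 0`, and without negative jumps this
forces a zero.
-/

lemma eventually_forall_Ioc_of_eventually_nhdsGT {p : ℝ → Prop} {a : ℝ}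
    (h : ∀ᶠ s in 𝓝[>] a, p s) : ∀ᶠ z in 𝓝[>] a, ∀ s ∈ Ioc a z, p s := by
  obtain ⟨u, hau, hu⟩ := mem_nhdsGT_iff_exists_Ioo_subset.1 h
  filter_upwards [Ioo_mem_nhdsGT hau] with z hz s hs using hu ⟨hs.1, hs.2.trans_lt hz.2⟩

section SetLIntegralIoc

variable {g : ℝ → ℝ≥0∞} {a b c : ℝ}

lemma setLIntegral_Ioc_le_mul {C : ℝ≥0∞} (h : ∀ s ∈ Ioc a b, g s ≤ C) :
    ∫⁻ s in Ioc a b, g s ≤ C * ENNReal.ofReal (b - a) :=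
  calc ∫⁻ s in Ioc a b, g s ≤ ∫⁻ _ in Ioc a b, C := setLIntegral_mono measurable_const h
    _ = C * ENNReal.ofReal (b - a) := by rw [setLIntegral_const, Real.volume_Ioc]

lemma mul_le_setLIntegral_Ioc {C : ℝ≥0∞} (h : ∀ s ∈ Ioc a b, C ≤ g s) :
    C * ENNReal.ofReal (b - a) ≤ ∫⁻ s in Ioc a b, g s :=
  calc C * ENNReal.ofReal (b - a) = ∫⁻ _ in Ioc a b, C := by
        rw [setLIntegral_const, Real.volume_Ioc]
    _ ≤ ∫⁻ s in Ioc a b, g s := setLIntegral_mono' measurableSet_Ioc h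

lemma setLIntegral_Ioc_add (hab : a ≤ b) (hbc : b ≤ c) :
    ∫⁻ s in Ioc a c, g s = (∫⁻ s in Ioc a b, g s) + ∫⁻ s in Ioc b c, g s := by
  rw [← Ioc_union_Ioc_eq_Ioc hab hbc, lintegral_union measurableSet_Ioc
    (Ioc_disjoint_Ioc_of_le le_rfl)]

lemma monotone_setLIntegral_Ioc : Monotone fun y => ∫⁻ s in Ioc a y, g s :=
  fun _ _ h => lintegral_mono_set (Ioc_subset_Ioc_right h)

lemma setLIntegral_Ioc_pos {C : ℝ≥0∞} (hC : C ≠ 0) (hg : ∀ᶠ s in 𝓝[>] a, C ≤ g s)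
    (hab : a < b) : 0 < ∫⁻ s in Ioc a b, g s := by
  obtain ⟨z, hgz, hz⟩ :=
    ((eventually_forall_Ioc_of_eventually_nhdsGT hg).and (Ioo_mem_nhdsGT hab)).exists
  calc 0 < C * ENNReal.ofReal (z - a) :=
        ENNReal.mul_pos hC (ENNReal.ofReal_pos.2 (sub_pos.2 hz.1)).ne'
    _ ≤ ∫⁻ s in Ioc a z, g s := mul_le_setLIntegral_Ioc hgz
    _ ≤ ∫⁻ s in Ioc a b, g s := monotone_setLIntegral_Ioc hz.2.le

lemma setLIntegral_Ioc_lt_setLIntegral_Ioc {C : ℝ≥0∞} (hC : C ≠ 0)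
    (hg : ∀ᶠ s in 𝓝[>] b, C ≤ g s) (hab : a ≤ b) (hbc : b < c)
    (hac : ∫⁻ s in Ioc a c, g s ≠ ⊤) :
    ∫⁻ s in Ioc a b, g s < ∫⁻ s in Ioc a c, g s := by
  rw [setLIntegral_Ioc_add hab hbc.le] at hac ⊢
  exact ENNReal.lt_add_right (ENNReal.add_ne_top.1 hac).1 (setLIntegral_Ioc_pos hC hg hbc).ne'

lemma tendsto_setLIntegral_Ioc_nhdsLT (g : ℝ → ℝ≥0∞) (a b : ℝ) :
    Tendsto (fun y => ∫⁻ s in Ioc a y, g s) (𝓝[<] b) (𝓝 (∫⁻ s in Ioc a b, g s)) := by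
  rcases le_or_gt b a with hba | hab
  · have hzero : ∀ y ≤ b, ∫⁻ s in Ioc a y, g s = 0 := fun y hy => by
      rw [Ioc_eq_empty_of_le (hy.trans hba), Measure.restrict_empty, lintegral_zero_measure]
    rw [hzero b le_rfl]
    exact tendsto_const_nhds.congr'
      (eventually_nhdsWithin_of_forall fun y hy => (hzero y (le_of_lt hy)).symm)
  convert (monotone_setLIntegral_Ioc (g := g) (a := a)).tendsto_nhdsLT b using 2
  refine le_antisymm ?_ (sSup_le (forall_mem_image.2 fun y hy => monotone_setLIntegral_Ioc hy.le))
  obtain ⟨u, hu_mono, hu, hu_lim⟩ := exists_seq_strictMono_tendsto' hab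
  have hunion : ⋃ n, Ioc a (u n) = Ioo a b := by
    ext s
    simp only [mem_iUnion, mem_Ioc, mem_Ioo]
    refine ⟨fun ⟨n, h1, h2⟩ => ⟨h1, h2.trans_lt (hu n).2⟩, fun ⟨h1, h2⟩ => ?_⟩
    obtain ⟨n, hn⟩ := (hu_lim.eventually (lt_mem_nhds h2)).exists
    exact ⟨n, h1, hn.le⟩
  have hdir : Directed (· ⊆ ·) fun n => Ioc a (u n) :=
    Monotone.directed_le fun _ _ h => Ioc_subset_Ioc_right (hu_mono.monotone h)
  calc ∫⁻ s in Ioc a b, g s = ∫⁻ s in Ioo a b, g s :=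
        (setLIntegral_congr Ioo_ae_eq_Ioc).symm
    _ = ⨆ n, ∫⁻ s in Ioc a (u n), g s := by
        rw [← hunion, setLIntegral_iUnion_of_directed _ hdir]
    _ ≤ _ := iSup_le fun n => le_sSup (mem_image_of_mem _ (show u n ∈ Iio b from (hu n).2))

lemma tendsto_setLIntegral_Ioc_nhdsGT {C : ℝ≥0∞} (hC : C ≠ ⊤)
    (hg : ∀ᶠ s in 𝓝[>] b, g s ≤ C) (hab : a ≤ b) :
    Tendsto (fun y => ∫⁻ s in Ioc a y, g s) (𝓝[>] b) (𝓝 (∫⁻ s in Ioc a b, g s)) := by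
  have hlin : Tendsto (fun y => C * ENNReal.ofReal (y - b)) (𝓝[>] b) (𝓝 0) := by
    have := ENNReal.Tendsto.const_mul ((ENNReal.continuous_ofReal.tendsto _).comp
      ((tendsto_id (x := 𝓝 b)).sub_const b)) (Or.inr hC)
    simpa using this.mono_left nhdsWithin_le_nhds
  have hsmall : Tendsto (fun y => ∫⁻ s in Ioc b y, g s) (𝓝[>] b) (𝓝 0) :=
    tendsto_of_tendsto_of_tendsto_of_le_of_le' tendsto_const_nhds hlin
      (Eventually.of_forall fun _ => bot_le)
      ((eventually_forall_Ioc_of_eventually_nhdsGT hg).mono fun _ => setLIntegral_Ioc_le_mul)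
  have := hsmall.const_add (∫⁻ s in Ioc a b, g s)
  rw [add_zero] at this
  exact this.congr'
    (eventually_nhdsWithin_of_forall fun y hy => (setLIntegral_Ioc_add hab (le_of_lt hy)).symm)

lemma continuousAt_setLIntegral_Ioc {r : ℝ} (hg : Tendsto g (𝓝[>] b) (𝓝 (ENNReal.ofReal r)))
    (hab : a ≤ b) : ContinuousAt (fun y => ∫⁻ s in Ioc a y, g s) b :=
  continuousAt_iff_continuous_left_right.2
    ⟨continuousWithinAt_Iio_iff_Iic.1 (tendsto_setLIntegral_Ioc_nhdsLT g a b),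
      continuousWithinAt_Ioi_iff_Ici.1 (tendsto_setLIntegral_Ioc_nhdsGT (by finiteness)
        (hg.eventually_le_const (ENNReal.lt_add_right ENNReal.ofReal_ne_top one_ne_zero))
        hab)⟩

lemma hasDerivWithinAt_toReal_setLIntegral_Ioc_self {r : ℝ} (hr : 0 ≤ r)
    (hg : Tendsto g (𝓝[>] b) (𝓝 (ENNReal.ofReal r))) :
    HasDerivWithinAt (fun y => (∫⁻ s in Ioc b y, g s).toReal) r (Ioi b) b := by
  rw [hasDerivWithinAt_iff_isLittleO]
  refine Asymptotics.IsLittleO.of_bound fun ε hε => ?_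
  have hband := hg.eventually
    (ENNReal.Icc_mem_nhds ENNReal.ofReal_ne_top (ENNReal.ofReal_pos.2 hε).ne')
  rw [← ENNReal.ofReal_sub _ hε.le, ← ENNReal.ofReal_add hr hε.le] at hband
  filter_upwards [eventually_forall_Ioc_of_eventually_nhdsGT hband, self_mem_nhdsWithin]
    with z hz (hbz : b < z)
  have hlow := mul_le_setLIntegral_Ioc fun s hs => (hz s hs).1
  have hup := setLIntegral_Ioc_le_mul fun s hs => (hz s hs).2
  rw [← ENNReal.ofReal_mul' (sub_nonneg.2 hbz.le)] at hlow hup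
  rw [← ENNReal.ofReal_toReal (ne_top_of_le_ne_top ENNReal.ofReal_ne_top hup)] at hlow hup
  have h1 := (ENNReal.ofReal_le_ofReal_iff ENNReal.toReal_nonneg).1 hlow
  have h2 := (ENNReal.ofReal_le_ofReal_iff (by positivity)).1 hup
  simp only [Ioc_self, Measure.restrict_empty, lintegral_zero_measure, ENNReal.toReal_zero,
    sub_zero, Real.norm_eq_abs, smul_eq_mul, abs_of_pos (sub_pos.2 hbz)]
  rw [abs_le]
  constructor <;> nlinarith

lemma hasDerivWithinAt_toReal_setLIntegral_Ioc {r : ℝ} (hr : 0 ≤ r)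
    (hg : Tendsto g (𝓝[>] b) (𝓝 (ENNReal.ofReal r))) (hab : a ≤ b)
    (hfin : ∫⁻ s in Ioc a b, g s ≠ ⊤) :
    HasDerivWithinAt (fun y => (∫⁻ s in Ioc a y, g s).toReal) r (Ici b) b := by
  have hfin' : ∀ᶠ y in 𝓝[>] b, ∫⁻ s in Ioc b y, g s ≠ ⊤ := by
    have := tendsto_setLIntegral_Ioc_nhdsGT (a := b) (by finiteness)
      (hg.eventually_le_const (ENNReal.lt_add_right ENNReal.ofReal_ne_top one_ne_zero)) le_rfl
    simp only [Ioc_self, Measure.restrict_empty, lintegral_zero_measure] at this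
    exact this.eventually_ne ENNReal.zero_ne_top
  refine hasDerivWithinAt_Ioi_iff_Ici.1 <|
    ((hasDerivWithinAt_toReal_setLIntegral_Ioc_self hr hg).const_add
      (∫⁻ s in Ioc a b, g s).toReal).congr_of_eventuallyEq ?_
      (by simp)
  filter_upwards [hfin', self_mem_nhdsWithin] with y hy (hby : b < y)
  rw [setLIntegral_Ioc_add hab hby.le, ENNReal.toReal_add hfin hy]

end SetLIntegralIoc

theorem HasDerivWithinAt.of_local_left_inverse {𝕜 : Type*} [NontriviallyNormedField 𝕜]
    {f g : 𝕜 → 𝕜} {f' a : 𝕜} {s t : Set 𝕜}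
    (hg : Tendsto g (𝓝[s] a) (𝓝[t] (g a))) (hf : HasDerivWithinAt f f' t (g a))
    (hf' : f' ≠ 0) (ha : a ∈ s) (hfg : ∀ᶠ y in 𝓝[s] a, f (g y) = y) :
    HasDerivWithinAt g f'⁻¹ s a :=
  HasFDerivWithinAt.of_local_left_inverse
    (f' := ContinuousLinearEquiv.unitsEquivAut 𝕜 (Units.mk0 f' hf')) hg hf ha hfg

namespace Cadlag

variable {f : ℝ → ℝ}

lemma pos_of_ofReal_lt_sInf_zeros (hf : Cadlag f)
    (hnnj : ∀ t : ℝ, 0 < t → leftLim f t ≤ f t) {x t : ℝ} (hx : 0 ≤ x) (hfx : 0 < f x)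
    (hxt : x ≤ t)
    (ht : ENNReal.ofReal t <
      sInf ((fun s : ℝ => ENNReal.ofReal s) '' {s : ℝ | x ≤ s ∧ f s = 0})) :
    0 < f t := by
  have hzero : ∀ s ∈ Icc x t, f s ≠ 0 := fun s hs h0 =>
    ht.not_ge (le_trans (sInf_le ⟨s, ⟨hs.1, h0⟩, rfl⟩) (ENNReal.ofReal_le_ofReal hs.2))
  by_contra! hft
  set A := {s ∈ Icc x t | f s ≤ 0}
  have hA : BddBelow A := ⟨x, fun s hs => hs.1.1⟩
  have htA : t ∈ A := ⟨⟨hxt, le_rfl⟩, hft⟩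
  set u := sInf A
  have hxu : x ≤ u := le_csInf ⟨t, htA⟩ fun s hs => hs.1.1
  have hut : u ≤ t := csInf_le hA htA
  rcases (hzero u ⟨hxu, hut⟩).lt_or_gt with hneg | hpos
  · -- the left limit at `u` is a limit of positive values, and jumps are upward
    have hxu' : x < u := hxu.lt_of_ne fun h => by rw [← h] at hneg; linarith
    obtain ⟨l, hl⟩ := hf.2 u (hx.trans_lt hxu') (by simp)
    have hl0 : 0 ≤ l := ge_of_tendsto hl <| by
      filter_upwards [Ioo_mem_nhdsLT hxu'] with s hs
      exact le_of_lt <| lt_of_not_ge fun h =>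
        (csInf_le hA ⟨⟨hs.1.le, hs.2.le.trans hut⟩, h⟩).not_gt hs.2
    have := hnnj u (hx.trans_lt hxu')
    rw [leftLim_eq_of_tendsto hl] at this
    linarith
  · -- right-continuity keeps `f` positive just after `u`, contradicting `u = inf A`
    obtain ⟨v, huv, hv⟩ := mem_nhdsGT_iff_exists_Ioo_subset.1
      ((hf.1 u (hx.trans hxu) (by simp)).eventually (eventually_gt_nhds hpos))
    refine (le_csInf ⟨t, htA⟩ fun s hs => le_of_not_gt fun hsv => ?_).not_gt huv
    rcases (csInf_le hA hs).eq_or_lt with hus | hus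
    · exact (hus ▸ hs.2).not_gt hpos
    · exact (hv ⟨hus, hsv⟩ : 0 < f s).not_ge hs.2

lemma cadlagOn_comp (hf : Cadlag f) {φ : ℝ → ℝ} {τ : ℝ≥0∞} (hφ : ∀ t, 0 ≤ φ t)
    (hcont : ∀ t, 0 ≤ t → ENNReal.ofReal t < τ → ContinuousAt φ t)
    (hmono : ∀ s t, 0 ≤ s → s < t → ENNReal.ofReal t < τ → φ s < φ t) :
    CadlagOn (f ∘ φ) τ := by
  constructor
  · intro t ht htτ
    refine (hf.1 (φ t) (hφ t) ENNReal.ofReal_lt_top).comp (tendsto_nhdsWithin_iff.2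
      ⟨(hcont t ht htτ).mono_left nhdsWithin_le_nhds, ?_⟩)
    filter_upwards [nhdsWithin_le_nhds
      ((ENNReal.continuous_ofReal.tendsto t).eventually_lt_const htτ), self_mem_nhdsWithin]
      with u hu (htu : t < u)
    exact hmono t u ht htu hu
  · intro t ht htτ
    obtain ⟨l, hl⟩ :=
      hf.2 (φ t) ((hφ 0).trans_lt (hmono 0 t le_rfl ht htτ)) ENNReal.ofReal_lt_top
    refine ⟨l, hl.comp (tendsto_nhdsWithin_iff.2
      ⟨(hcont t ht.le htτ).mono_left nhdsWithin_le_nhds, ?_⟩)⟩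
    filter_upwards [nhdsWithin_le_nhds (eventually_gt_nhds ht), self_mem_nhdsWithin]
      with u hu (hut : u < t)
    exact hmono u t hu.le hut htτ

end Cadlag

def rightContInv (i : ℝ → ℝ≥0∞) (x t : ℝ) : ℝ≥0∞ :=
  sInf ((fun y : ℝ => ENNReal.ofReal y) '' {y : ℝ | x ≤ y ∧ ENNReal.ofReal t < i y})

section RightContInv

variable {i : ℝ → ℝ≥0∞} {x t y : ℝ}

lemma rightContInv_le (hy : x ≤ y) (ht : ENNReal.ofReal t < i y) :
    rightContInv i x t ≤ ENNReal.ofReal y :=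
  sInf_le ⟨y, ⟨hy, ht⟩, rfl⟩

lemma ofReal_le_rightContInv : ENNReal.ofReal x ≤ rightContInv i x t :=
  le_sInf <| forall_mem_image.2 fun _ hy => ENNReal.ofReal_le_ofReal hy.1

lemma le_of_ofReal_lt_rightContInv (hy : x ≤ y) (h : ENNReal.ofReal y < rightContInv i x t) :
    i y ≤ ENNReal.ofReal t :=
  not_lt.1 fun ht => (rightContInv_le hy ht).not_gt h

lemma ofReal_lt_of_rightContInv_lt (hi : Monotone i) (h : rightContInv i x t < ENNReal.ofReal y) :
    ENNReal.ofReal t < i y := by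
  obtain ⟨_, ⟨z, hz, rfl⟩, hzy⟩ := sInf_lt_iff.1 h
  exact hz.2.trans_le (hi (ENNReal.ofReal_lt_ofReal_iff'.1 hzy).1.le)

lemma monotone_rightContInv : Monotone (rightContInv i x) := fun _ _ h =>
  sInf_le_sInf (image_mono fun _ hy => ⟨hy.1, (ENNReal.ofReal_le_ofReal h).trans_lt hy.2⟩)

lemma rightContInv_le_of_forall_gt {a : ℝ} (h : ∀ y > a, x ≤ y ∧ ENNReal.ofReal t < i y) :
    rightContInv i x t ≤ ENNReal.ofReal a :=
  ge_of_tendsto ((ENNReal.continuous_ofReal.tendsto a).mono_left (nhdsWithin_le_nhds (s := Ioi a)))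
    (eventually_nhdsWithin_of_forall fun y hy => rightContInv_le (h y hy).1 (h y hy).2)

lemma continuous_rightContInv (hi : Monotone i)
    (hstrict : ∀ y z, x ≤ y → y < z → i z ≠ ⊤ → i y < i z) :
    Continuous (rightContInv i x) := by
  refine continuous_iff_continuousAt.2 fun t => tendsto_order.2 ⟨fun a ha => ?_, fun a ha => ?_⟩
  · rcases lt_or_ge a (ENNReal.ofReal x) with hax | hxa
    · exact Eventually.of_forall fun _ => hax.trans_le ofReal_le_rightContInv
    obtain ⟨e, hae, he⟩ := exists_between ha
    obtain ⟨e', hee', he'⟩ := exists_between he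
    have hy : ENNReal.ofReal e.toReal = e := ENNReal.ofReal_toReal hee'.ne_top
    have hz : ENNReal.ofReal e'.toReal = e' := ENNReal.ofReal_toReal he'.ne_top
    have hxy : x ≤ e.toReal :=
      (ENNReal.ofReal_lt_ofReal_iff'.1 (hxa.trans_lt (hae.trans_eq hy.symm))).1.le
    have hyz : e.toReal < e'.toReal := (ENNReal.toReal_lt_toReal hee'.ne_top he'.ne_top).2 hee'
    -- `i ≤ t` at level `e'`, so by strict monotonicity `i < t` already at level `e`
    have hiz := le_of_ofReal_lt_rightContInv (hxy.trans hyz.le) (hz ▸ he')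
    have hiy := (hstrict _ _ hxy hyz (ne_top_of_le_ne_top ENNReal.ofReal_ne_top hiz)).trans_le hiz
    filter_upwards [(ENNReal.continuous_ofReal.tendsto t).eventually_const_lt hiy] with s hs
    exact hae.trans_le (hy ▸ not_lt.1 fun h => (ofReal_lt_of_rightContInv_lt hi h).not_gt hs)
  · obtain ⟨_, ⟨y, hy, rfl⟩, hya⟩ := sInf_lt_iff.1 ha
    filter_upwards [(ENNReal.continuous_ofReal.tendsto t).eventually_lt_const hy.2] with s hs
    exact (rightContInv_le hy.1 hs).trans_lt hya

lemma rightContInv_zero (hstrict : ∀ y z, x ≤ y → y < z → i z ≠ ⊤ → i y < i z)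
    (hix : i x = 0) : rightContInv i x 0 = ENNReal.ofReal x := by
  refine le_antisymm (rightContInv_le_of_forall_gt fun y hy => ⟨hy.le, ?_⟩)
    ofReal_le_rightContInv
  rw [ENNReal.ofReal_zero]
  rcases eq_or_ne (i y) ⊤ with h | h
  · simp [h]
  · exact hix ▸ hstrict x y le_rfl hy h

lemma rightContInv_lt_of_lt_iSup (hi : Monotone i) (hix : i x = 0) {T : ℝ≥0∞}
    (ht : ENNReal.ofReal t < ⨆ (y : ℝ) (_ : ENNReal.ofReal y < T), i y) :
    rightContInv i x t < T := by
  obtain ⟨y, hy⟩ := lt_iSup_iff.1 ht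
  obtain ⟨hyT, hty⟩ := lt_iSup_iff.1 hy
  have hxy : x ≤ y := not_lt.1 fun hyx =>
    ENNReal.not_lt_zero (hix ▸ hty.trans_le (hi hyx.le))
  exact (rightContInv_le hxy hty).trans_lt hyT

lemma rightContInv_eq_of_iSup_le {T : ℝ≥0∞} (hxT : ENNReal.ofReal x ≤ T)
    (htop : ∀ y, T < ENNReal.ofReal y → i y = ⊤)
    (ht : ⨆ (y : ℝ) (_ : ENNReal.ofReal y < T), i y ≤ ENNReal.ofReal t) :
    rightContInv i x t = T := by
  refine le_antisymm ?_ (le_sInf (forall_mem_image.2 fun y hy => not_lt.1 fun hyT =>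
    hy.2.not_ge ((le_iSup₂ (f := fun y (_ : ENNReal.ofReal y < T) => i y) y hyT).trans ht)))
  rcases eq_or_ne T ⊤ with rfl | hT
  · exact le_top
  rw [← ENNReal.ofReal_toReal hT] at hxT htop ⊢
  have hxτ := (ENNReal.ofReal_le_ofReal_iff ENNReal.toReal_nonneg).1 hxT
  refine rightContInv_le_of_forall_gt fun y hy => ⟨hxτ.trans hy.le, ?_⟩
  rw [htop y (ENNReal.ofReal_lt_ofReal_iff'.2 ⟨hy, ENNReal.toReal_nonneg.trans_lt hy⟩)]
  exact ENNReal.ofReal_lt_top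

lemma le_toReal_rightContInv (hne : rightContInv i x t ≠ ⊤) :
    x ≤ (rightContInv i x t).toReal :=
  (ENNReal.ofReal_le_iff_le_toReal hne).1 ofReal_le_rightContInv

section Regular

variable {T : ℝ≥0∞} (hx : 0 ≤ x) (hi : Monotone i) (hix : i x = 0)
  (hcontT : ∀ β, x ≤ β → ENNReal.ofReal β < T → ContinuousAt i β)

include hx hi hix hcontT

lemma apply_toReal_rightContInv
    (htL : ENNReal.ofReal t < ⨆ (y : ℝ) (_ : ENNReal.ofReal y < T), i y) :
    i (rightContInv i x t).toReal = ENNReal.ofReal t := by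
  have hcT := rightContInv_lt_of_lt_iSup hi hix htL
  set β := (rightContInv i x t).toReal
  have hβ : ENNReal.ofReal β = rightContInv i x t := ENNReal.ofReal_toReal hcT.ne_top
  have hcont := hcontT β (le_toReal_rightContInv hcT.ne_top) (hβ ▸ hcT)
  refine le_antisymm (le_of_tendsto (hcont.mono_left (nhdsWithin_le_nhds (s := Iio β))) ?_)
    (ge_of_tendsto (hcont.mono_left (nhdsWithin_le_nhds (s := Ioi β))) ?_)
  · filter_upwards [self_mem_nhdsWithin] with y (hy : y < β)
    rcases le_or_gt x y with hxy | hyx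
    · exact le_of_ofReal_lt_rightContInv hxy
        (hβ ▸ (ENNReal.ofReal_lt_ofReal_iff (hx.trans_lt (hxy.trans_lt hy))).2 hy)
    · exact ((hi hyx.le).trans hix.le).trans bot_le
  · filter_upwards [self_mem_nhdsWithin] with z (hz : β < z)
    have hz0 : 0 < z := by linarith [le_toReal_rightContInv hcT.ne_top]
    exact (ofReal_lt_of_rightContInv_lt hi (hβ ▸ (ENNReal.ofReal_lt_ofReal_iff hz0).2 hz)).le

lemma rightContInv_lt_rightContInv {s : ℝ} (hs : 0 ≤ s) (hst : s < t)
    (htL : ENNReal.ofReal t < ⨆ (y : ℝ) (_ : ENNReal.ofReal y < T), i y) :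
    rightContInv i x s < rightContInv i x t := by
  refine (monotone_rightContInv hst.le).lt_of_ne fun h => hst.ne ?_
  have hsL := (ENNReal.ofReal_le_ofReal hst.le).trans_lt htL
  rw [← ENNReal.ofReal_eq_ofReal_iff hs (hs.trans hst.le),
    ← apply_toReal_rightContInv hx hi hix hcontT hsL,
    ← apply_toReal_rightContInv hx hi hix hcontT htL, h]

lemma hasDerivWithinAt_toReal_rightContInv
    (hstrict : ∀ y z, x ≤ y → y < z → i z ≠ ⊤ → i y < i z) {φ : ℝ → ℝ}
    (hφ : ∀ β, x ≤ β → ENNReal.ofReal β < T → φ β ≠ 0)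
    (hd : ∀ β, x ≤ β → ENNReal.ofReal β < T → i β ≠ ⊤ →
      HasDerivWithinAt (fun y => (i y).toReal) (φ β)⁻¹ (Ici β) β)
    (ht : 0 ≤ t) (htL : ENNReal.ofReal t < ⨆ (y : ℝ) (_ : ENNReal.ofReal y < T), i y) :
    HasDerivWithinAt (fun s => (rightContInv i x s).toReal) (φ (rightContInv i x t).toReal)
      (Ici t) t := by
  have hcT := rightContInv_lt_of_lt_iSup hi hix htL
  have hβ := le_toReal_rightContInv hcT.ne_top
  have hβT : ENNReal.ofReal (rightContInv i x t).toReal < T := by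
    rwa [ENNReal.ofReal_toReal hcT.ne_top]
  have hcont : ContinuousAt (fun s => (rightContInv i x s).toReal) t :=
    (ENNReal.continuousAt_toReal hcT.ne_top).comp (continuous_rightContInv hi hstrict).continuousAt
  have hL : ∀ᶠ u in 𝓝 t, ENNReal.ofReal u < ⨆ (y : ℝ) (_ : ENNReal.ofReal y < T), i y :=
    (ENNReal.continuous_ofReal.tendsto t).eventually_lt_const htL
  rw [← inv_inv (φ _)]
  refine (hd _ hβ hβT (apply_toReal_rightContInv hx hi hix hcontT htL ▸ ENNReal.ofReal_ne_top)
    |>.of_local_left_inverse (tendsto_nhdsWithin_iff.2 ⟨hcont.mono_left nhdsWithin_le_nhds, ?_⟩)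
      (inv_ne_zero (hφ _ hβ hβT)) self_mem_Ici ?_)
  all_goals filter_upwards [nhdsWithin_le_nhds hL, self_mem_nhdsWithin] with u hu (htu : t ≤ u)
  · exact ENNReal.toReal_mono (rightContInv_lt_of_lt_iSup hi hix hu).ne_top
      (monotone_rightContInv htu)
  · rw [apply_toReal_rightContInv hx hi hix hcontT hu, ENNReal.toReal_ofReal (ht.trans htu)]

lemma cadlagOn_comp_toReal_rightContInv
    (hstrict : ∀ y z, x ≤ y → y < z → i z ≠ ⊤ → i y < i z) {f : ℝ → ℝ}
    (hf : Cadlag f) :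
    CadlagOn (fun s => f (rightContInv i x s).toReal)
      (⨆ (y : ℝ) (_ : ENNReal.ofReal y < T), i y) :=
  hf.cadlagOn_comp (fun _ => ENNReal.toReal_nonneg)
    (fun _ _ htL => (ENNReal.continuousAt_toReal
      (rightContInv_lt_of_lt_iSup hi hix htL).ne_top).comp
        (continuous_rightContInv hi hstrict).continuousAt)
    (fun _ _ hs hst htL => ENNReal.toReal_strict_mono
      (rightContInv_lt_of_lt_iSup hi hix htL).ne_top
      (rightContInv_lt_rightContInv hx hi hix hcontT hs hst htL))

end Regular

end RightContInv

section Absorbed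

variable {f ftil : ℝ → ℝ} {T : ℝ≥0∞}
  (hftil : ∀ t : ℝ, ftil t = if ENNReal.ofReal t < T then f t else 0)

include hftil

lemma eventually_inv_ofReal_le_inv_ofReal_absorbed {a : ℝ}
    (hrc : Tendsto f (𝓝[>] a) (𝓝 (f a))) :
    ∀ᶠ s in 𝓝[>] a, (ENNReal.ofReal (f a + 1))⁻¹ ≤ (ENNReal.ofReal (ftil s))⁻¹ := by
  filter_upwards [hrc.eventually_lt_const (lt_add_one (f a))] with s hs
  rw [hftil]
  split_ifs
  · exact ENNReal.inv_le_inv.2 (ENNReal.ofReal_le_ofReal hs.le)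
  · simp

lemma tendsto_inv_ofReal_absorbed {β : ℝ} (hrc : Tendsto f (𝓝[>] β) (𝓝 (f β)))
    (hβT : ENNReal.ofReal β < T) (hfβ : 0 < f β) :
    Tendsto (fun s => (ENNReal.ofReal (ftil s))⁻¹) (𝓝[>] β)
      (𝓝 (ENNReal.ofReal (f β)⁻¹)) := by
  have hftil_eq : ftil =ᶠ[𝓝[>] β] f := by
    filter_upwards [nhdsWithin_le_nhds
      ((ENNReal.continuous_ofReal.tendsto β).eventually_lt_const hβT)] with s hs
    rw [hftil, if_pos hs]
  rw [ENNReal.ofReal_inv_of_pos hfβ]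
  exact ((ENNReal.continuous_ofReal.tendsto _).comp (hrc.congr' hftil_eq.symm)).inv

lemma setLIntegral_Ioc_inv_ofReal_absorbed_eq_top {x y : ℝ} (hxT : ENNReal.ofReal x ≤ T)
    (hy : T < ENNReal.ofReal y) : ∫⁻ s in Ioc x y, (ENNReal.ofReal (ftil s))⁻¹ = ⊤ := by
  set τ := max x T.toReal
  have hτy : τ < y := max_lt ((ENNReal.ofReal_lt_ofReal_iff'.1 (hxT.trans_lt hy)).1)
    ((ENNReal.toReal_lt_of_lt_ofReal hy))
  have hgτ : ∀ s ∈ Ioc τ y, ⊤ ≤ (ENNReal.ofReal (ftil s))⁻¹ := fun s hs => by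
    have hτs : T.toReal ≤ s := (le_max_right _ _).trans hs.1.le
    have hTs : T ≤ ENNReal.ofReal s :=
      (ENNReal.le_ofReal_iff_toReal_le hy.ne_top (ENNReal.toReal_nonneg.trans hτs)).2 hτs
    rw [hftil, if_neg hTs.not_gt, ENNReal.ofReal_zero, ENNReal.inv_zero]
  refine top_unique ((lintegral_mono_set (Ioc_subset_Ioc_left (le_max_left x T.toReal))).trans' ?_)
  calc ⊤ = ⊤ * ENNReal.ofReal (y - τ) :=
        (ENNReal.top_mul (ENNReal.ofReal_pos.2 (sub_pos.2 hτy)).ne').symm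
    _ ≤ ∫⁻ s in Ioc τ y, (ENNReal.ofReal (ftil s))⁻¹ := mul_le_setLIntegral_Ioc hgτ

end Absorbed

/-- the Lamperti transform solves the one-dimensional time-change
initial value problem.  Here `T` is the first zero of `f` after `x` (with values in
`ℝ≥0∞`, so `T = ⊤` when there is no such zero), `ftil` is `f` absorbed at `T`,
`i(y) = ∫_x^y dt/ftil(t)` (a Lebesgue integral in `ℝ≥0∞`, so that it is infinite past `T`),
`L = i(T−)` and `c` is the right-continuous inverse of `i`. -/
theorem stmt4 (f : ℝ → ℝ) (hf : Cadlag f)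
    (hnnj : ∀ t : ℝ, 0 < t → Function.leftLim f t ≤ f t)
    (x : ℝ) (hx : 0 ≤ x) (hfx : 0 < f x)
    (T : ℝ≥0∞) (hT : T = sInf ((fun t : ℝ => ENNReal.ofReal t) '' {t : ℝ | x ≤ t ∧ f t = 0}))
    (ftil : ℝ → ℝ) (hftil : ∀ t : ℝ, ftil t = if ENNReal.ofReal t < T then f t else 0)
    (i : ℝ → ℝ≥0∞) (hi : ∀ y : ℝ, i y = ∫⁻ s in Set.Ioc x y, (ENNReal.ofReal (ftil s))⁻¹)
    (L : ℝ≥0∞) (hL : L = ⨆ (y : ℝ) (_ : ENNReal.ofReal y < T), i y)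
    (c : ℝ → ℝ≥0∞)
    (hc : ∀ t : ℝ, c t =
      sInf ((fun y : ℝ => ENNReal.ofReal y) '' {y : ℝ | x ≤ y ∧ ENNReal.ofReal t < i y})) :
    c 0 = ENNReal.ofReal x ∧
    Monotone c ∧
    ContinuousOn c (Set.Ici 0) ∧
    (∀ s t : ℝ, 0 ≤ s → s < t → ENNReal.ofReal t < L → c s < c t) ∧
    (∀ t : ℝ, 0 ≤ t → L ≤ ENNReal.ofReal t → c t = T) ∧
    ∃ h : ℝ → ℝ, CadlagOn h L ∧
      ∀ t : ℝ, 0 ≤ t → ENNReal.ofReal t < L →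
        HasDerivWithinAt (fun s : ℝ => (c s).toReal) (h t) (Set.Ici t) t ∧
        h t = f (c t).toReal := by
  obtain rfl : i = fun y => ∫⁻ s in Ioc x y, (ENNReal.ofReal (ftil s))⁻¹ := funext hi
  obtain rfl : c = rightContInv _ x := funext hc
  subst hL
  set i := fun y => ∫⁻ s in Ioc x y, (ENNReal.ofReal (ftil s))⁻¹
  have hrc (t : ℝ) (ht : 0 ≤ t) : Tendsto f (𝓝[>] t) (𝓝 (f t)) :=
    hf.1 t ht ENNReal.ofReal_lt_top
  have hgood (β : ℝ) (hxβ : x ≤ β) (hβT : ENNReal.ofReal β < T) :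
      0 < f β ∧ Tendsto (fun s => (ENNReal.ofReal (ftil s))⁻¹) (𝓝[>] β)
        (𝓝 (ENNReal.ofReal (f β)⁻¹)) := by
    have hfβ := hf.pos_of_ofReal_lt_sInf_zeros hnnj hx hfx hxβ (hT ▸ hβT)
    exact ⟨hfβ, tendsto_inv_ofReal_absorbed hftil (hrc β (hx.trans hxβ)) hβT hfβ⟩
  have hmono : Monotone i := monotone_setLIntegral_Ioc
  have hix : i x = 0 := by simp [i]
  have hstrict (y z : ℝ) (hxy : x ≤ y) (hyz : y < z) : i z ≠ ⊤ → i y < i z :=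
    setLIntegral_Ioc_lt_setLIntegral_Ioc (ENNReal.inv_ne_zero.2 ENNReal.ofReal_ne_top)
      (eventually_inv_ofReal_le_inv_ofReal_absorbed hftil (hrc y (hx.trans hxy))) hxy hyz
  have hcontT (β : ℝ) (hxβ : x ≤ β) (hβT : ENNReal.ofReal β < T) : ContinuousAt i β :=
    continuousAt_setLIntegral_Ioc (hgood β hxβ hβT).2 hxβ
  have hxT : ENNReal.ofReal x ≤ T := by
    rw [hT]; exact le_sInf (forall_mem_image.2 fun s hs => ENNReal.ofReal_le_ofReal hs.1)
  refine ⟨rightContInv_zero hstrict hix, monotone_rightContInv,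
    (continuous_rightContInv hmono hstrict).continuousOn,
    fun s t hs hst => rightContInv_lt_rightContInv hx hmono hix hcontT hs hst,
    fun t _ => rightContInv_eq_of_iSup_le hxT
      (fun y => setLIntegral_Ioc_inv_ofReal_absorbed_eq_top hftil hxT),
    _, cadlagOn_comp_toReal_rightContInv hx hmono hix hcontT hstrict hf,
    fun t ht htL => ⟨?_, rfl⟩⟩
  exact hasDerivWithinAt_toReal_rightContInv hx hmono hix hcontT hstrict
    (fun β hxβ hβT => (hgood β hxβ hβT).1.ne')
    (fun β hxβ hβT => hasDerivWithinAt_toReal_setLIntegral_Ioc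
      (inv_nonneg.2 (hgood β hxβ hβT).1.le) (hgood β hxβ hβT).2 hxβ) ht htL
end
end
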